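/- arXiv:2302.14518 — 9 statements merged into one kernel-verified Lean document; each statement's English description precedes it below -/
import Mathlib

section
/- Chain rule for maximal leakage (finite-alphabet form): Let 𝒳, 𝒴₁, 𝒴₂ be nonempty finite sets and let p : 𝒳 × 𝒴₁ × 𝒴₂ → ℝ be a strictly positive joint probability mass function (p(x,y₁,y₂) > 0 for all triples and the values sum to 1). Write p_X(x) = ∑_{y₁,y₂} p(x,y₁,y₂) and p_{XY₁}(x,y₁) = ∑_{y₂} p(x,y₁,y₂). Then ∑_{(y₁,y₂)} max_x [p(x,y₁,y₂)/p_X(x)] ≤ ( ∑_{y₁} max_x [p_{XY₁}(x,y₁)/p_X(x)] ) · ( max_{y₁} ∑_{y₂} max_x [p(x,y₁,y₂)/p_{XY₁}(x,y₁)] ). -/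
open scoped BigOperators

/-- Chain rule for maximal leakage (finite-alphabet, exponentiated form):
`ℒ(X → (Y₁,Y₂)) ≤ ℒ(X → Y₁) + ℒ(X → Y₂ | Y₁)`. -/
theorem maximal_leakage_chain_rule
    {X Y1 Y2 : Type*} [Fintype X] [Fintype Y1] [Fintype Y2]
    [Nonempty X] [Nonempty Y1] [Nonempty Y2]
    (p : X × Y1 × Y2 → ℝ)
    (hpos : ∀ t, 0 < p t)
    (hsum : ∑ t, p t = 1)
    (pX : X → ℝ) (hpX : ∀ x, pX x = ∑ y1, ∑ y2, p (x, y1, y2))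
    (pXY1 : X × Y1 → ℝ) (hpXY1 : ∀ x y1, pXY1 (x, y1) = ∑ y2, p (x, y1, y2)) :
    ∑ y : Y1 × Y2, ⨆ x, p (x, y.1, y.2) / pX x
      ≤ (∑ y1, ⨆ x, pXY1 (x, y1) / pX x) *
        (⨆ y1, ∑ y2, ⨆ x, p (x, y1, y2) / pXY1 (x, y1)) := by
  have hpXpos : ∀ x, 0 < pX x := fun x => by
    rw [hpX]
    exact Finset.sum_pos (fun y1 _ => Finset.sum_pos (fun y2 _ => hpos _)
      Finset.univ_nonempty) Finset.univ_nonempty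
  have hpXY1pos : ∀ x y1, 0 < pXY1 (x, y1) := fun x y1 => by
    rw [hpXY1]
    exact Finset.sum_pos (fun y2 _ => hpos _) Finset.univ_nonempty
  set A : Y1 → ℝ := fun y1 => ⨆ x, pXY1 (x, y1) / pX x with hA
  set C : Y1 → Y2 → ℝ := fun y1 y2 => ⨆ x, p (x, y1, y2) / pXY1 (x, y1) with hC
  set B : Y1 → ℝ := fun y1 => ∑ y2, C y1 y2 with hB
  have hAnn : ∀ y1, 0 ≤ A y1 := fun y1 =>
    le_ciSup_of_le (Set.Finite.bddAbove (Set.finite_range _)) (Classical.arbitrary X)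
      (div_nonneg (hpXY1pos _ _).le (hpXpos _).le)
  have key : ∀ y1 y2, (⨆ x, p (x, y1, y2) / pX x) ≤ A y1 * C y1 y2 := by
    intro y1 y2
    apply ciSup_le
    intro x
    have h1 : p (x, y1, y2) / pX x
        = (pXY1 (x, y1) / pX x) * (p (x, y1, y2) / pXY1 (x, y1)) := by
      rw [div_mul_div_comm, mul_comm (pX x), mul_div_mul_left _ _ (hpXY1pos x y1).ne']
    rw [h1]
    simp only [hA, hC]
    exact mul_le_mul
      (le_ciSup (f := fun x => pXY1 (x, y1) / pX x)
        (Set.Finite.bddAbove (Set.finite_range _)) x)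
      (le_ciSup (f := fun x => p (x, y1, y2) / pXY1 (x, y1))
        (Set.Finite.bddAbove (Set.finite_range _)) x)
      (div_nonneg (hpos _).le (hpXY1pos _ _).le)
      (hAnn y1)
  calc ∑ y : Y1 × Y2, ⨆ x, p (x, y.1, y.2) / pX x
      = ∑ y1, ∑ y2, ⨆ x, p (x, y1, y2) / pX x := Fintype.sum_prod_type _
    _ ≤ ∑ y1, ∑ y2, A y1 * C y1 y2 :=
        Finset.sum_le_sum (fun y1 _ => Finset.sum_le_sum (fun y2 _ => key y1 y2))
    _ = ∑ y1, A y1 * B y1 := by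
        simp only [hB, Finset.mul_sum]
    _ ≤ ∑ y1, A y1 * (⨆ y1', B y1') :=
        Finset.sum_le_sum (fun y1 _ =>
          mul_le_mul_of_nonneg_left
            (le_ciSup (Set.Finite.bddAbove (Set.finite_range _)) y1) (hAnn y1))
    _ = (∑ y1, A y1) * (⨆ y1', B y1') := (Finset.sum_mul _ _ _).symm
end

section
/- Gaussian exterior integral in spherical form: Let d ∈ ℕ, d ≥ 1, and σ, R > 0. Then ∫_{{w ∈ ℝ^d : ‖w‖₂ ≥ R}} (2πσ²)^{−d/2} exp(−(‖w‖₂ − R)²/(2σ²)) dw = (R/(σ√2))^{d−1} · (1/Γ(d/2)) · ∑_{i=0}^{d−1} binom(d−1, i) (σ√2/R)^i Γ((i+1)/2), where ‖·‖₂ is the Euclidean norm and Γ is the Gamma function. -/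
/-!
In polar coordinates the integral becomes the area `2 π^{d/2} / Γ(d/2)` of the unit sphere times
`∫_R^∞ r^{d-1} exp(-(r-R)²/c²) dr` with `c = σ√2`. Substituting `r = R + s` and expanding
`(R + s)^{d-1}` binomially leaves the half-line Gaussian moments
`∫_0^∞ s^i exp(-s²/c²) ds = c^{i+1} Γ((i+1)/2) / 2`.
-/

open MeasureTheory Real Set

theorem integral_Ioi_eq_integral_Ioi_zero_comp_add_right {E : Type*} [NormedAddCommGroup E]
    [NormedSpace ℝ E] (f : ℝ → E) (a : ℝ) :
    ∫ x in Ioi a, f x = ∫ x in Ioi 0, f (x + a) := by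
  rw [← (measurePreserving_add_right volume a).setIntegral_preimage_emb
    (measurableEmbedding_addRight a)]
  simp

theorem integrableOn_Ioi_pow_mul_exp_neg_sq_div_sq {c : ℝ} (hc : c ≠ 0) (i : ℕ) :
    IntegrableOn (fun x : ℝ => x ^ i * exp (-x ^ 2 / c ^ 2)) (Ioi 0) := by
  have h := integrableOn_rpow_mul_exp_neg_mul_sq (b := (c ^ 2)⁻¹) (by positivity)
    (s := i) (by linarith [i.cast_nonneg (α := ℝ)])
  simpa [rpow_natCast, div_eq_inv_mul] using h

theorem integral_Ioi_pow_mul_exp_neg_sq_div_sq {c : ℝ} (hc : 0 < c) (i : ℕ) :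
    ∫ x in Ioi (0 : ℝ), x ^ i * exp (-x ^ 2 / c ^ 2) = c ^ (i + 1) / 2 * Gamma ((i + 1) / 2) := by
  have hgamma := integral_rpow_mul_exp_neg_mul_rpow (p := 2) (q := i) (b := (c ^ 2)⁻¹) two_pos
    (by linarith [i.cast_nonneg (α := ℝ)]) (by positivity)
  have hscale : ((c ^ 2)⁻¹) ^ (-((i : ℝ) + 1) / 2) = c ^ (i + 1) := by
    rw [← rpow_natCast, ← rpow_natCast c, ← rpow_neg_one, ← rpow_mul hc.le, ← rpow_mul hc.le]
    congr 1; push_cast; ring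
  simp only [rpow_natCast, rpow_two, hscale] at hgamma
  rw [div_eq_mul_one_div _ (2 : ℝ), ← hgamma]
  congr with x
  ring_nf

theorem integral_Ici_pow_mul_exp_neg_sq_sub_div_sq {c : ℝ} (hc : 0 < c) (n : ℕ) (a : ℝ) :
    ∫ y in Ici a, y ^ n * exp (-(y - a) ^ 2 / c ^ 2)
      = ∑ i ∈ Finset.range (n + 1), (n.choose i : ℝ) * a ^ (n - i) *
          (c ^ (i + 1) / 2 * Gamma ((i + 1) / 2)) := by
  have binomial (x : ℝ) : (x + a) ^ n * exp (-(x + a - a) ^ 2 / c ^ 2)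
      = ∑ i ∈ Finset.range (n + 1), (n.choose i : ℝ) * a ^ (n - i) *
          (x ^ i * exp (-x ^ 2 / c ^ 2)) := by
    rw [add_pow, add_sub_cancel_right, Finset.sum_mul]
    exact Finset.sum_congr rfl fun i _ => by ring
  rw [integral_Ici_eq_integral_Ioi, integral_Ioi_eq_integral_Ioi_zero_comp_add_right]
  simp_rw [binomial]
  rw [integral_finsetSum _ fun i _ =>
    (integrableOn_Ioi_pow_mul_exp_neg_sq_div_sq hc.ne' i).const_mul _]
  simp_rw [integral_const_mul, integral_Ioi_pow_mul_exp_neg_sq_div_sq hc]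

open Module Metric in
theorem integral_setOf_le_norm_fun_norm_addHaar {E F : Type*} [NormedAddCommGroup E]
    [NormedSpace ℝ E] [MeasurableSpace E] [BorelSpace E] [FiniteDimensional ℝ E] [Nontrivial E]
    [NormedAddCommGroup F] [NormedSpace ℝ F] (μ : Measure E) [μ.IsAddHaarMeasure]
    (f : ℝ → F) {R : ℝ} (hR : 0 ≤ R) :
    ∫ x in {x | R ≤ ‖x‖}, f ‖x‖ ∂μ
      = finrank ℝ E • μ.real (ball 0 1) • ∫ y in Ici R, y ^ (finrank ℝ E - 1) • f y := by
  have hset : {x : E | R ≤ ‖x‖} = norm ⁻¹' Ici R := rfl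
  rw [hset, ← integral_indicator (measurableSet_Ici.preimage measurable_norm)]
  have hpos : (Ioi (0 : ℝ) ∩ Ici R : Set ℝ) =ᵐ[volume] Ici R := by
    simpa [Ici_inter_Ici, hR] using
      ae_eq_set_inter (Ioi_ae_eq_Ici (a := (0 : ℝ))) (ae_eq_refl (Ici R))
  have hcomp : (norm ⁻¹' Ici R).indicator (fun x : E => f ‖x‖)
      = fun x => (Ici R).indicator f ‖x‖ :=
    funext fun _ => indicator_comp_right (g := f) norm
  rw [hcomp, integral_fun_norm_addHaar μ ((Ici R).indicator f),
    ← indicator_smul (Ici R) (fun y : ℝ => y ^ (finrank ℝ E - 1)) f,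
    setIntegral_indicator measurableSet_Ici, setIntegral_congr_set hpos]

theorem EuclideanSpace.card_mul_volume_real_unitBall (ι : Type*) [Nonempty ι] [Fintype ι] :
    (Fintype.card ι : ℝ) * volume.real (Metric.ball (0 : EuclideanSpace ℝ ι) 1)
      = 2 * √π ^ Fintype.card ι / Gamma (Fintype.card ι / 2) := by
  have hn : (0 : ℝ) < Fintype.card ι / 2 := by positivity
  rw [measureReal_def, EuclideanSpace.volume_ball, ENNReal.ofReal_one, one_pow, one_mul,
    ENNReal.toReal_ofReal (by positivity), Gamma_add_one hn.ne']
  field_simp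

theorem pi_mul_sq_rpow_neg_div_two {c : ℝ} (hc : 0 < c) (n : ℕ) :
    (π * c ^ 2) ^ (-(n : ℝ) / 2) = ((c * √π) ^ n)⁻¹ := by
  have hcπ : 0 < c * √π := by positivity
  rw [show π * c ^ 2 = (c * √π) ^ 2 by rw [mul_pow, sq_sqrt pi_pos.le]; ring,
    ← rpow_natCast _ 2, ← rpow_mul hcπ.le,
    show ((2 : ℕ) : ℝ) * (-(n : ℝ) / 2) = -n by push_cast; ring, rpow_neg hcπ.le, rpow_natCast]

/-- Gaussian exterior integral in spherical form:
`∫_{‖w‖ ≥ R} (2πσ²)^{-d/2} exp(-(‖w‖-R)²/(2σ²)) dw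
  = (R/(σ√2))^{d-1} (1/Γ(d/2)) ∑_{i=0}^{d-1} C(d-1,i) (σ√2/R)^i Γ((i+1)/2)`. -/
theorem gaussian_exterior_integral_spherical
    (d : ℕ) (hd : 1 ≤ d) (σ R : ℝ) (hσ : 0 < σ) (hR : 0 < R) :
    (∫ w in {w : EuclideanSpace ℝ (Fin d) | R ≤ ‖w‖},
        (2 * Real.pi * σ ^ 2) ^ (-(d : ℝ) / 2) *
          Real.exp (-(‖w‖ - R) ^ 2 / (2 * σ ^ 2)))
    = (R / (σ * Real.sqrt 2)) ^ (d - 1) * (1 / Real.Gamma ((d : ℝ) / 2)) *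
        ∑ i ∈ Finset.range d,
          ((d - 1).choose i : ℝ) * (σ * Real.sqrt 2 / R) ^ i *
            Real.Gamma (((i : ℝ) + 1) / 2) := by
  obtain ⟨n, rfl⟩ : ∃ n, d = n + 1 := ⟨d - 1, by omega⟩
  have hsphere := EuclideanSpace.card_mul_volume_real_unitBall (Fin (n + 1))
  rw [Fintype.card_fin] at hsphere
  set c := σ * √2 with hc_def
  have hc : 0 < c := by positivity
  have hc2 : 2 * σ ^ 2 = c ^ 2 := by rw [hc_def, mul_pow, sq_sqrt zero_le_two]; ring
  rw [show 2 * π * σ ^ 2 = π * c ^ 2 by rw [← hc2]; ring, hc2, pi_mul_sq_rpow_neg_div_two hc,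
    integral_setOf_le_norm_fun_norm_addHaar volume
      (fun r => ((c * √π) ^ (n + 1))⁻¹ * exp (-(r - R) ^ 2 / c ^ 2)) hR.le,
    finrank_euclideanSpace_fin, nsmul_eq_mul, smul_eq_mul]
  simp_rw [smul_eq_mul, mul_left_comm _ ((c * √π) ^ (n + 1))⁻¹]
  rw [integral_const_mul, Nat.add_sub_cancel, integral_Ici_pow_mul_exp_neg_sq_sub_div_sq hc,
    ← mul_assoc, hsphere, Finset.mul_sum, Finset.mul_sum, Finset.mul_sum]
  refine Finset.sum_congr rfl fun i hi => ?_
  have hin : i ≤ n := Nat.lt_succ_iff.mp (Finset.mem_range.mp hi)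
  rw [pow_sub₀ _ hR.ne' hin, div_pow, div_pow]
  field_simp
  ring
end

section
/- Per-iteration bound for Gaussian noise under L₂-bounded updates (core of Theorem 2): Let d ∈ ℕ, d ≥ 1, σ > 0, R > 0, and let f(w) = (2πσ²)^{−d/2} exp(−‖w‖₂²/(2σ²)) be the density of 𝒩(0, σ²I_d). Then ∫_{ℝ^d} sup_{x: ‖x‖₂ ≤ R} f(w − x) dw = V₂(d,R)/(2πσ²)^{d/2} + (1/Γ(d/2)) ∑_{i=0}^{d−1} binom(d−1, i) Γ((i+1)/2) (R/(σ√2))^{d−1−i}, where V₂(d,R) = π^{d/2} R^d / Γ(d/2 + 1) is the volume of the Euclidean ball of radius R in ℝ^d. -/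
/-!
For a function `g` of the distance that decreases on `[0, ∞)`, the supremum of `g ‖w - x‖` over
the ball `‖x‖ ≤ R` is attained at the point of the ball nearest to `w`, so the integrand is the
Gaussian density evaluated at distance `(‖w‖ - R)₊` from the ball. Polar coordinates turn the
integral into `d · vol(B₁) · ∫₀^∞ r^(d-1) exp (-(r - R)₊² / s²)` with `s = σ√2`. The range
`r ≤ R` gives the volume of the ball of radius `R`; on `r > R` the substitution `r = R + t` and
the binomial expansion of `(R + t)^(d-1)` leave the Gaussian moments
`∫₀^∞ t^i exp (-t² / s²) = s^(i+1) Γ((i+1)/2) / 2`.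
-/

open MeasureTheory Set Real Metric

section SupOverBall

variable {E : Type*} [NormedAddCommGroup E]

lemma max_norm_sub_le_norm_sub {R : ℝ} (w : E) {x : E} (hx : x ∈ closedBall (0 : E) R) :
    max (‖w‖ - R) 0 ≤ ‖w - x‖ := by
  rw [mem_closedBall_zero_iff] at hx
  exact max_le (by linarith [norm_sub_norm_le w x]) (norm_nonneg _)

variable [NormedSpace ℝ E]

lemma exists_mem_closedBall_norm_sub_eq {R : ℝ} (hR : 0 ≤ R) (w : E) :
    ∃ x ∈ closedBall (0 : E) R, ‖w - x‖ = max (‖w‖ - R) 0 := by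
  rcases le_or_gt ‖w‖ R with hw | hw
  · exact ⟨w, mem_closedBall_zero_iff.2 hw, by simp [hw]⟩
  · have hw0 : 0 < ‖w‖ := hR.trans_lt hw
    refine ⟨(R / ‖w‖) • w, ?_, ?_⟩
    · rw [mem_closedBall_zero_iff, norm_smul, norm_div, norm_norm, Real.norm_of_nonneg hR,
        div_mul_cancel₀ _ hw0.ne']
    · rw [show w - (R / ‖w‖) • w = (1 - R / ‖w‖) • w by rw [sub_smul, one_smul], norm_smul,
        Real.norm_of_nonneg (sub_nonneg.2 ((div_le_one hw0).2 hw.le)), sub_mul, one_mul,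
        div_mul_cancel₀ _ hw0.ne', max_eq_left (by linarith)]

lemma iSup_closedBall_comp_norm_sub {g : ℝ → ℝ} (hg : AntitoneOn g (Ici 0)) (hg₀ : 0 ≤ g)
    {R : ℝ} (hR : 0 ≤ R) (w : E) :
    ⨆ x ∈ closedBall (0 : E) R, g ‖w - x‖ = g (max (‖w‖ - R) 0) := by
  -- Each `x` outside the ball contributes `⨆ _ : False, _ = 0` to the supremum.
  have hle : ∀ x ∈ closedBall (0 : E) R, g ‖w - x‖ ≤ g (max (‖w‖ - R) 0) := fun x hx ↦
    hg (mem_Ici.2 (le_max_right _ _)) (mem_Ici.2 (norm_nonneg _)) (max_norm_sub_le_norm_sub w hx)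
  have hbound : ∀ x, ⨆ _ : x ∈ closedBall (0 : E) R, g ‖w - x‖ ≤ g (max (‖w‖ - R) 0) :=
    fun x ↦ Real.iSup_le (hle x) (hg₀ _)
  obtain ⟨x₀, hx₀, hx₀w⟩ := exists_mem_closedBall_norm_sub_eq hR w
  refine le_antisymm (Real.iSup_le hbound (hg₀ _))
    (le_ciSup_of_le ⟨_, forall_mem_range.2 hbound⟩ x₀ ?_)
  rw [ciSup_pos hx₀, hx₀w]

end SupOverBall

lemma integrableOn_Ioi_comp_add_right_iff {F : Type*} [NormedAddCommGroup F] {g : ℝ → F} (a : ℝ) :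
    IntegrableOn (fun x ↦ g (x + a)) (Ioi 0) ↔ IntegrableOn g (Ioi a) := by
  have := (measurePreserving_add_right volume a).integrableOn_comp_preimage
    (MeasurableEquiv.addRight a).measurableEmbedding (f := g) (s := Ioi a)
  rwa [preimage_add_const_Ioi, sub_self] at this

lemma setIntegral_Ioi_comp_add_right {F : Type*} [NormedAddCommGroup F] [NormedSpace ℝ F]
    (g : ℝ → F) (a : ℝ) : ∫ x in Ioi 0, g (x + a) = ∫ x in Ioi a, g x := by
  have := (measurePreserving_add_right volume a).setIntegral_preimage_emb
    (MeasurableEquiv.addRight a).measurableEmbedding g (Ioi a)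
  rwa [preimage_add_const_Ioi, sub_self] at this

lemma add_pow_mul_eq_sum {α : Type*} [CommSemiring α] (x y z : α) (n : ℕ) :
    (x + y) ^ n * z = ∑ i ∈ Finset.range (n + 1), (n.choose i : α) * y ^ (n - i) * (x ^ i * z) := by
  rw [add_pow, Finset.sum_mul]
  exact Finset.sum_congr rfl fun i _ ↦ by ring

section Gaussian

variable {s : ℝ}

lemma integrableOn_pow_mul_exp_neg_sq_div_sq (hs : 0 < s) (i : ℕ) :
    IntegrableOn (fun x ↦ x ^ i * exp (-x ^ 2 / s ^ 2)) (Ioi 0) := by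
  refine (integrableOn_rpow_mul_exp_neg_mul_sq (inv_pos.2 (pow_pos hs 2)) (s := i)
    (by linarith [i.cast_nonneg (α := ℝ)])).congr_fun (fun x _ ↦ ?_) measurableSet_Ioi
  simp only [rpow_natCast]
  ring_nf

lemma integral_pow_mul_exp_neg_sq_div_sq (hs : 0 < s) (i : ℕ) :
    ∫ x in Ioi 0, x ^ i * exp (-x ^ 2 / s ^ 2) = s ^ (i + 1) / 2 * Gamma ((i + 1) / 2) := by
  have h := integral_rpow_mul_exp_neg_mul_rpow two_pos
    (by linarith [i.cast_nonneg (α := ℝ)] : (-1 : ℝ) < i) (inv_pos.2 (pow_pos hs 2))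
  have hscale : (s ^ 2)⁻¹ ^ (-((i : ℝ) + 1) / 2) = s ^ (i + 1) := by
    rw [inv_rpow (sq_nonneg s), ← rpow_neg (sq_nonneg s), neg_div, neg_neg,
      rpow_div_two_eq_sqrt _ (sq_nonneg s), sqrt_sq hs.le]
    exact_mod_cast rpow_natCast s (i + 1)
  rw [hscale, mul_one_div] at h
  rw [← h]
  refine setIntegral_congr_fun measurableSet_Ioi fun x _ ↦ ?_
  simp only [rpow_natCast, rpow_two]
  ring_nf

lemma integrableOn_add_pow_mul_exp_neg_sq_div_sq (hs : 0 < s) (R : ℝ) (n : ℕ) :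
    IntegrableOn (fun x ↦ (x + R) ^ n * exp (-x ^ 2 / s ^ 2)) (Ioi 0) := by
  simp_rw [add_pow_mul_eq_sum]
  exact integrable_finsetSum _ fun i _ ↦
    (integrableOn_pow_mul_exp_neg_sq_div_sq hs i).const_mul _

lemma integral_add_pow_mul_exp_neg_sq_div_sq (hs : 0 < s) (R : ℝ) (n : ℕ) :
    ∫ x in Ioi 0, (x + R) ^ n * exp (-x ^ 2 / s ^ 2) =
      ∑ i ∈ Finset.range (n + 1),
        (n.choose i : ℝ) * R ^ (n - i) * (s ^ (i + 1) / 2 * Gamma ((i + 1) / 2)) := by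
  simp_rw [add_pow_mul_eq_sum]
  rw [integral_finsetSum _ fun i _ ↦ (integrableOn_pow_mul_exp_neg_sq_div_sq hs i).const_mul _]
  simp_rw [integral_const_mul, integral_pow_mul_exp_neg_sq_div_sq hs]

lemma integral_pow_mul_exp_neg_max_sub_sq (hs : 0 < s) {R : ℝ} (hR : 0 ≤ R) (n : ℕ) :
    ∫ r in Ioi 0, r ^ n * exp (-(max (r - R) 0) ^ 2 / s ^ 2) =
      R ^ (n + 1) / (n + 1) + ∑ i ∈ Finset.range (n + 1),
        (n.choose i : ℝ) * R ^ (n - i) * (s ^ (i + 1) / 2 * Gamma ((i + 1) / 2)) := by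
  set g : ℝ → ℝ := fun r ↦ r ^ n * exp (-(max (r - R) 0) ^ 2 / s ^ 2)
  have hhead : EqOn g (fun r ↦ r ^ n) (uIcc 0 R) := fun r hr ↦ by
    rw [uIcc_of_le hR] at hr
    simp [g, max_eq_right (sub_nonpos.2 hr.2)]
  have htail : EqOn (fun x ↦ g (x + R)) (fun x ↦ (x + R) ^ n * exp (-x ^ 2 / s ^ 2)) (Ioi 0) :=
    fun x hx ↦ by simp [g, max_eq_left (le_of_lt (mem_Ioi.1 hx))]
  have hint : IntegrableOn g (Ioi R) := (integrableOn_Ioi_comp_add_right_iff R).1 <|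
    (integrableOn_add_pow_mul_exp_neg_sq_div_sq hs R n).congr_fun htail.symm measurableSet_Ioi
  rw [← intervalIntegral.integral_interval_add_Ioi'
    (Continuous.intervalIntegrable (by fun_prop) 0 R) hint,
    intervalIntegral.integral_congr hhead, integral_pow, ← setIntegral_Ioi_comp_add_right,
    setIntegral_congr_fun measurableSet_Ioi htail, integral_add_pow_mul_exp_neg_sq_div_sq hs]
  simp

theorem integral_exp_neg_max_norm_sub_sq {ι : Type*} [Fintype ι] [Nonempty ι] (hs : 0 < s)
    {R : ℝ} (hR : 0 ≤ R) :
    ∫ w : EuclideanSpace ℝ ι, exp (-(max (‖w‖ - R) 0) ^ 2 / s ^ 2) =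
      √π ^ Fintype.card ι * R ^ Fintype.card ι / Gamma (Fintype.card ι / 2 + 1) +
        √π ^ Fintype.card ι / Gamma (Fintype.card ι / 2) *
          ∑ i ∈ Finset.range (Fintype.card ι), ((Fintype.card ι - 1).choose i : ℝ) *
            Gamma ((i + 1) / 2) * R ^ (Fintype.card ι - 1 - i) * s ^ (i + 1) := by
  set n := Fintype.card ι with hn
  have hn₀ : n - 1 + 1 = n := Nat.sub_add_cancel Fintype.card_pos
  rw [integral_fun_norm_addHaar volume (fun r ↦ exp (-(max (r - R) 0) ^ 2 / s ^ 2)),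
    finrank_euclideanSpace, measureReal_def, EuclideanSpace.volume_ball, ← hn]
  simp only [smul_eq_mul, nsmul_eq_mul, ENNReal.ofReal_one, one_pow, one_mul]
  rw [ENNReal.toReal_ofReal (by positivity), integral_pow_mul_exp_neg_max_sub_sq hs hR, hn₀]
  have hn₀' : ((n - 1 : ℕ) : ℝ) + 1 = n := by exact_mod_cast hn₀
  have hΓ : Gamma (n / 2 + 1) = n / 2 * Gamma (n / 2) := Gamma_add_one (by positivity)
  have hn_ne : (n : ℝ) ≠ 0 := Nat.cast_ne_zero.2 Fintype.card_ne_zero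
  rw [hn₀', hΓ, mul_add, mul_add, Finset.mul_sum, Finset.mul_sum, Finset.mul_sum]
  congr 1
  · field_simp
  · refine Finset.sum_congr rfl fun i _ ↦ ?_
    field_simp

end Gaussian

/-- Per-iteration bound for Gaussian noise under `L₂`-bounded updates (core of Theorem 2):
`∫_{ℝ^d} sup_{‖x‖₂ ≤ R} f(w-x) dw = V₂(d,R)/(2πσ²)^{d/2}
  + (1/Γ(d/2)) ∑_{i=0}^{d-1} C(d-1,i) Γ((i+1)/2) (R/(σ√2))^{d-1-i}`,
where `f` is the density of `𝒩(0, σ²I_d)` and `V₂(d,R) = π^{d/2} R^d / Γ(d/2+1)`. -/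
theorem gaussian_sliding_sup_integral
    (d : ℕ) (hd : 1 ≤ d) (σ R : ℝ) (hσ : 0 < σ) (hR : 0 < R)
    (f : EuclideanSpace ℝ (Fin d) → ℝ)
    (hf : ∀ w, f w = (2 * Real.pi * σ ^ 2) ^ (-(d : ℝ) / 2) *
        Real.exp (-‖w‖ ^ 2 / (2 * σ ^ 2))) :
    (∫ w, ⨆ x ∈ Metric.closedBall (0 : EuclideanSpace ℝ (Fin d)) R, f (w - x))
    = Real.pi ^ ((d : ℝ) / 2) * R ^ d / Real.Gamma ((d : ℝ) / 2 + 1) /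
        (2 * Real.pi * σ ^ 2) ^ ((d : ℝ) / 2)
      + (1 / Real.Gamma ((d : ℝ) / 2)) *
          ∑ i ∈ Finset.range d,
            ((d - 1).choose i : ℝ) * Real.Gamma (((i : ℝ) + 1) / 2) *
              (R / (σ * Real.sqrt 2)) ^ (d - 1 - i) := by
  have : Nonempty (Fin d) := ⟨⟨0, hd⟩⟩
  set s := σ * √2
  have hs : 0 < s := by positivity
  have hs2 : 2 * σ ^ 2 = s ^ 2 := by rw [mul_pow, sq_sqrt zero_le_two]; ring
  clear_value s
  have hvol : (2 * π * σ ^ 2) ^ ((d : ℝ) / 2) = √π ^ d * s ^ d := by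
    rw [rpow_div_two_eq_sqrt _ (by positivity), rpow_natCast,
      show 2 * π * σ ^ 2 = π * s ^ 2 by rw [← hs2]; ring, sqrt_mul' _ (sq_nonneg s),
      sqrt_sq hs.le, mul_pow]
  have hπ : π ^ ((d : ℝ) / 2) = √π ^ d := by rw [rpow_div_two_eq_sqrt _ pi_pos.le, rpow_natCast]
  have hc : (2 * π * σ ^ 2) ^ (-(d : ℝ) / 2) = (√π ^ d * s ^ d)⁻¹ := by
    rw [neg_div, rpow_neg (by positivity), hvol]
  have hsup (w : EuclideanSpace ℝ (Fin d)) : ⨆ x ∈ closedBall 0 R, f (w - x) =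
      (√π ^ d * s ^ d)⁻¹ * exp (-(max (‖w‖ - R) 0) ^ 2 / s ^ 2) := by
    simp_rw [hf, hc, hs2]
    refine iSup_closedBall_comp_norm_sub (g := fun t ↦ (√π ^ d * s ^ d)⁻¹ * exp (-t ^ 2 / s ^ 2))
      (fun a ha b _ hab ↦ ?_) (fun t ↦ by positivity) hR.le w
    dsimp only
    gcongr
  simp_rw [hsup]
  rw [integral_const_mul, integral_exp_neg_max_norm_sub_sq hs hR.le, Fintype.card_fin, hπ, hvol,
    mul_add, Finset.mul_sum, Finset.mul_sum, Finset.mul_sum]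
  congr 1
  · field_simp
  · refine Finset.sum_congr rfl fun i hi ↦ ?_
    have hpow : s ^ (i + 1) * s ^ (d - 1 - i) = s ^ d := by
      rw [← pow_add]
      congr 1
      have := Finset.mem_range.1 hi
      omega
    rw [div_pow]
    field_simp
    linear_combination ((d - 1).choose i : ℝ) * hpow
end

section
/- One-dimensional sliding-supremum integral: Let f₀ : ℝ → ℝ be a probability density function (f₀ ≥ 0, measurable, ∫_ℝ f₀ = 1) that is symmetric around 0 (f₀(−x) = f₀(x) for all x) and non-increasing on [0, ∞). Then for every R > 0, ∫_ℝ sup_{x: |x| ≤ R} f₀(w − x) dw = 1 + 2R f₀(0). -/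
/-!
Since `f₀` decreases in `|·|`, the supremum of `x ↦ f₀ (w - x)` over `[-R, R]` is attained at the
point of `[-R, R]` nearest to `w`. The resulting function of `w` is `f₀` cut open at `0`, with its
two halves translated to `(-∞, -R)` and `(R, ∞)`, and the constant `f₀ 0` filling `[-R, R]`;
its integral is therefore `∫ f₀ + 2R f₀(0)`.
-/

open MeasureTheory Set

theorem Function.Even.apply_le_of_abs_le {f : ℝ → ℝ} (h_even : Function.Even f)
    (h_anti : AntitoneOn f (Ici 0)) {u v : ℝ} (huv : |u| ≤ |v|) : f v ≤ f u := by
  have h_abs (x : ℝ) : f |x| = f x := by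
    rcases abs_choice x with h | h <;> rw [h]
    exact h_even x
  rw [← h_abs u, ← h_abs v]
  exact h_anti (abs_nonneg u) (abs_nonneg v) huv

/-- On `ℝ`, `⨆ x ∈ s, g x` is `⨆ x, ⨆ _ : x ∈ s, g x`, whose inner suprema are `sSup ∅ = 0`
off `s`. -/
theorem Real.biSup_eq_of_mem_of_forall_le {α : Type*} {g : α → ℝ} {s : Set α} {x₀ : α}
    (hx₀ : x₀ ∈ s) (hg : ∀ x ∈ s, g x ≤ g x₀) (hg₀ : 0 ≤ g x₀) :
    ⨆ x ∈ s, g x = g x₀ := by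
  have h_le (x : α) : ⨆ _ : x ∈ s, g x ≤ g x₀ := Real.iSup_le (hg x) hg₀
  refine le_antisymm (Real.iSup_le h_le hg₀) ?_
  exact le_ciSup_of_le ⟨g x₀, forall_mem_range.2 h_le⟩ x₀ (ciSup_pos (f := fun _ => g x₀) hx₀).ge

theorem abs_sub_projIcc_le {a b : ℝ} (h : a ≤ b) (w : ℝ) {x : ℝ} (hx : x ∈ Icc a b) :
    |w - projIcc a b h w| ≤ |w - x| := by
  rw [coe_projIcc]
  obtain ⟨hax, hxb⟩ := hx
  grind

theorem biSup_Icc_comp_sub_eq {f : ℝ → ℝ} (hf₀ : 0 ≤ f) (hf : ∀ u v, |u| ≤ |v| → f v ≤ f u)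
    {a b : ℝ} (h : a ≤ b) (w : ℝ) :
    ⨆ x ∈ Icc a b, f (w - x) = f (w - projIcc a b h w) :=
  Real.biSup_eq_of_mem_of_forall_le (projIcc a b h w).2
    (fun _ hx => hf _ _ (abs_sub_projIcc_le h w hx)) (hf₀ _)

theorem integral_eq_setIntegral_Iio_add_Icc_add_Ioi {g : ℝ → ℝ} {a b : ℝ} (h : a ≤ b)
    (h₁ : IntegrableOn g (Iio a)) (h₂ : IntegrableOn g (Icc a b)) (h₃ : IntegrableOn g (Ioi b)) :
    ∫ x, g x = (∫ x in Iio a, g x) + (∫ x in Icc a b, g x) + ∫ x in Ioi b, g x := by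
  rw [← intervalIntegral.integral_Iio_add_Ici h₁ (Icc_union_Ioi_eq_Ici h ▸ h₂.union h₃),
    ← Icc_union_Ioi_eq_Ici h,
    setIntegral_union ((Iic_disjoint_Ioi le_rfl).mono_left Icc_subset_Iic_self) measurableSet_Ioi
      h₂ h₃, add_assoc]

theorem setIntegral_preimage_comp_sub_right (f : ℝ → ℝ) (c : ℝ) (s : Set ℝ) :
    ∫ w in (· - c) ⁻¹' s, f (w - c) = ∫ t in s, f t :=
  (measurePreserving_sub_right volume c).setIntegral_preimage_emb
    (measurableEmbedding_subRight c) f s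

theorem integral_comp_sub_projIcc {f : ℝ → ℝ} (hf : Integrable f) {a b : ℝ} (h : a ≤ b) :
    ∫ w, f (w - projIcc a b h w) = (∫ t, f t) + (b - a) * f 0 := by
  have h_left : EqOn (fun w => f (w - projIcc a b h w)) (fun w => f (w - a)) (Iio a) :=
    fun w hw => by simp [projIcc_of_le_left h hw.le]
  have h_mid : EqOn (fun w => f (w - projIcc a b h w)) (fun _ => f 0) (Icc a b) :=
    fun w hw => by simp [projIcc_of_mem h hw]
  have h_right : EqOn (fun w => f (w - projIcc a b h w)) (fun w => f (w - b)) (Ioi b) :=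
    fun w hw => by simp [projIcc_of_right_le h hw.le]
  have h_Iio : ∫ w in Iio a, f (w - a) = ∫ t in Iio 0, f t := by
    simpa using setIntegral_preimage_comp_sub_right f a (Iio 0)
  have h_Ioi : ∫ w in Ioi b, f (w - b) = ∫ t in Ioi 0, f t := by
    simpa using setIntegral_preimage_comp_sub_right f b (Ioi 0)
  calc ∫ w, f (w - projIcc a b h w)
      = (∫ w in Iio a, f (w - a)) + (∫ _ in Icc a b, f 0) + ∫ w in Ioi b, f (w - b) := by
        rw [integral_eq_setIntegral_Iio_add_Icc_add_Ioi h
            ((hf.comp_sub_right a).integrableOn.congr_fun h_left.symm measurableSet_Iio)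
            ((integrableOn_const measure_Icc_lt_top.ne).congr_fun h_mid.symm measurableSet_Icc)
            ((hf.comp_sub_right b).integrableOn.congr_fun h_right.symm measurableSet_Ioi),
          setIntegral_congr_fun measurableSet_Iio h_left,
          setIntegral_congr_fun measurableSet_Icc h_mid,
          setIntegral_congr_fun measurableSet_Ioi h_right]
    _ = (∫ t in Iio 0, f t) + (b - a) * f 0 + ∫ t in Ioi 0, f t := by
        rw [h_Iio, h_Ioi, setIntegral_const, Real.volume_real_Icc_of_le h, smul_eq_mul]
    _ = (∫ t, f t) + (b - a) * f 0 := by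
        rw [← intervalIntegral.integral_Iic_add_Ioi hf.integrableOn hf.integrableOn,
          setIntegral_congr_set Iio_ae_eq_Iic]
        ring

theorem sliding_sup_integral_one_dim_general
    (f0 : ℝ → ℝ)
    (h_nonneg : ∀ x, 0 ≤ f0 x)
    (h_int : ∫ x, f0 x = 1)
    (h_symm : ∀ x, f0 (-x) = f0 x)
    (h_mono : ∀ x y, 0 ≤ x → x ≤ y → f0 y ≤ f0 x)
    (R : ℝ) (hR : 0 < R) :
    ∫ w, ⨆ x ∈ Set.Icc (-R) R, f0 (w - x) = 1 + 2 * R * f0 0 := by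
  have h_le : -R ≤ R := by linarith
  have h_abs (u v : ℝ) : |u| ≤ |v| → f0 v ≤ f0 u :=
    Function.Even.apply_le_of_abs_le h_symm fun x hx y _ hxy => h_mono x y hx hxy
  simp_rw [biSup_Icc_comp_sub_eq h_nonneg h_abs h_le]
  rw [integral_comp_sub_projIcc (integrable_of_integral_eq_one h_int) h_le, h_int]
  ring

/-- One-dimensional sliding-supremum integral: if `f₀` is a density on `ℝ`, symmetric
around `0` and non-increasing on `[0,∞)`, then
`∫_ℝ sup_{|x| ≤ R} f₀(w - x) dw = 1 + 2R f₀(0)` for every `R > 0`. -/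
theorem sliding_sup_integral_one_dim
    (f0 : ℝ → ℝ)
    (h_nonneg : ∀ x, 0 ≤ f0 x) (h_meas : Measurable f0)
    (h_int : ∫ x, f0 x = 1)
    (h_symm : ∀ x, f0 (-x) = f0 x)
    (h_mono : ∀ x y, 0 ≤ x → x ≤ y → f0 y ≤ f0 x)
    (R : ℝ) (hR : 0 < R) :
    ∫ w, ⨆ x ∈ Set.Icc (-R) R, f0 (w - x) = 1 + 2 * R * f0 0 :=
  sliding_sup_integral_one_dim_general f0 h_nonneg h_int h_symm h_mono R hR
end

section
/- Per-iteration identity for product noise under L∞-bounded updates (core of Theorem 3): Let d ∈ ℕ, d ≥ 1, R > 0, and let f₀ : ℝ → ℝ be a probability density function that is symmetric around 0 and non-increasing on [0, ∞). Then ∫_{ℝ^d} ∏_{i=1}^d ( sup_{x_i: |x_i| ≤ R} f₀(w_i − x_i) ) dw = (1 + 2R f₀(0))^d. -/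
/-!
For an even `f₀` that decreases away from `0`, the supremum of `f₀ (w - x)` over `|x| ≤ R` is
attained at the point of `[-R, R]` closest to `w`, so it equals `f₀ (max (|w| - R) 0)`: the
density `f₀` cut open at `0` with a plateau of height `f₀ 0` and width `2R` inserted. Its
integral is therefore `1 + 2R f₀(0)`, and the `d`-dimensional integrand is a product of such
one-dimensional functions, whose integral factorises.
-/

open MeasureTheory Set

/-- For `x ∉ s` the inner supremum `⨆ _ : x ∈ s, f x` is `sSup ∅ = 0` in `ℝ`. -/
theorem Real.biSup_eq_of_isMaxOn {α : Type*} {f : α → ℝ} {s : Set α} {c : α} (hf : 0 ≤ f)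
    (hc : c ∈ s) (hmax : IsMaxOn f s c) : ⨆ x ∈ s, f x = f c := by
  have hle (x : α) : ⨆ _ : x ∈ s, f x ≤ f c := Real.iSup_le (fun hx => hmax hx) (hf c)
  refine le_antisymm (Real.iSup_le hle (hf c)) ?_
  exact le_ciSup_of_le ⟨f c, forall_mem_range.2 hle⟩ c (ciSup_pos (f := fun _ => f c) hc).ge

theorem Function.Even.apply_abs {α β : Type*} [AddGroup α] [LinearOrder α] {f : α → β}
    (hf : Function.Even f) (x : α) : f |x| = f x :=
  abs_by_cases (fun t => f t = f x) rfl (hf x)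

theorem Function.Even.apply_le_apply_of_abs_le {f : ℝ → ℝ} (hf : Function.Even f)
    (hmono : AntitoneOn f (Ici 0)) {x y : ℝ} (h : |x| ≤ |y|) : f y ≤ f x := by
  rw [← hf.apply_abs x, ← hf.apply_abs y]
  exact hmono (abs_nonneg x) (abs_nonneg y) h

theorem abs_sub_max_min_eq {R : ℝ} (hR : 0 ≤ R) (w : ℝ) :
    |w - max (-R) (min w R)| = max (|w| - R) 0 := by
  grind

theorem biSup_Icc_apply_sub_eq {f : ℝ → ℝ} (hf : 0 ≤ f) (heven : Function.Even f)
    (hmono : AntitoneOn f (Ici 0)) {R : ℝ} (hR : 0 ≤ R) (w : ℝ) :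
    ⨆ x ∈ Icc (-R) R, f (w - x) = f (max (|w| - R) 0) := by
  have hc : max (-R) (min w R) ∈ Icc (-R) R :=
    ⟨le_max_left _ _, max_le (by linarith) (min_le_right _ _)⟩
  rw [Real.biSup_eq_of_isMaxOn (f := fun x => f (w - x)) (fun x => hf (w - x)) hc,
    ← heven.apply_abs, abs_sub_max_min_eq hR]
  intro x hx
  refine heven.apply_le_apply_of_abs_le hmono ?_
  rw [abs_sub_max_min_eq hR]
  refine max_le ?_ (abs_nonneg _)
  linarith [abs_sub_abs_le_abs_sub w x, abs_le.2 hx]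

theorem setIntegral_Ioi_comp_sub_right (f : ℝ → ℝ) (a : ℝ) :
    ∫ t in Ioi a, f (t - a) = ∫ x in Ioi 0, f x := by
  have := (measurePreserving_add_right volume a).setIntegral_preimage_emb
    (measurableEmbedding_addRight a) (fun t => f (t - a)) (Ioi a)
  simpa using this.symm

theorem integral_comp_max_abs_sub {f : ℝ → ℝ} (hf : Integrable f) (heven : Function.Even f)
    {R : ℝ} (hR : 0 ≤ R) : ∫ w, f (max (|w| - R) 0) = (∫ x, f x) + 2 * R * f 0 := by
  have hf_abs : ∫ x, f x = 2 * ∫ x in Ioi 0, f x := by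
    rw [← integral_comp_abs]
    simp only [heven.apply_abs]
  have hflat : ∫ t in Ioc 0 R, f (max (t - R) 0) = R * f 0 := by
    rw [setIntegral_congr_fun measurableSet_Ioc (g := fun _ => f 0)
      (fun t ht => by rw [max_eq_right (by linarith [ht.2])]), setIntegral_const]
    simp [hR]
  have hshift : ∫ t in Ioi R, f (max (t - R) 0) = ∫ x in Ioi 0, f x := by
    rw [setIntegral_congr_fun measurableSet_Ioi (g := fun t => f (t - R))
      (fun t ht => by rw [max_eq_left (by linarith [mem_Ioi.1 ht])]),
      setIntegral_Ioi_comp_sub_right]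
  have hint_flat : IntegrableOn (fun t => f (max (t - R) 0)) (Ioc 0 R) := by
    refine (integrableOn_const measure_Ioc_lt_top.ne (C := f 0)).congr_fun (fun t ht => ?_)
      measurableSet_Ioc
    rw [max_eq_right (by linarith [ht.2])]
  have hint_shift : IntegrableOn (fun t => f (max (t - R) 0)) (Ioi R) := by
    refine (hf.comp_sub_right R).integrableOn.congr_fun (fun t ht => ?_) measurableSet_Ioi
    rw [max_eq_left (by linarith [mem_Ioi.1 ht])]
  rw [integral_comp_abs (f := fun t => f (max (t - R) 0)), ← Ioc_union_Ioi_eq_Ioi hR,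
    setIntegral_union (Ioc_disjoint_Ioi le_rfl) measurableSet_Ioi hint_flat hint_shift,
    hflat, hshift, hf_abs]
  ring

theorem product_sliding_sup_integral_general
    (d : ℕ) (R : ℝ) (hR : 0 < R)
    (f0 : ℝ → ℝ)
    (h_nonneg : ∀ x, 0 ≤ f0 x)
    (h_int : ∫ x, f0 x = 1)
    (h_symm : ∀ x, f0 (-x) = f0 x)
    (h_mono : ∀ x y, 0 ≤ x → x ≤ y → f0 y ≤ f0 x) :
    (∫ w : Fin d → ℝ, ∏ i, ⨆ x ∈ Set.Icc (-R) R, f0 (w i - x))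
      = (1 + 2 * R * f0 0) ^ d := by
  have hint : Integrable f0 := .of_integral_ne_zero (by rw [h_int]; exact one_ne_zero)
  have hanti : AntitoneOn f0 (Ici 0) := fun x hx y _ hxy => h_mono x y hx hxy
  simp_rw [biSup_Icc_apply_sub_eq h_nonneg h_symm hanti hR.le]
  rw [volume_pi, integral_fintype_prod_eq_pow (fun t => f0 (max (|t| - R) 0)),
    integral_comp_max_abs_sub hint h_symm hR.le, h_int, Fintype.card_fin]

/-- Per-iteration identity for product noise under `L∞`-bounded updates (core of Theorem 3):
`∫_{ℝ^d} ∏_{i=1}^d (sup_{|x_i| ≤ R} f₀(w_i - x_i)) dw = (1 + 2R f₀(0))^d`. -/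
theorem product_sliding_sup_integral
    (d : ℕ) (hd : 1 ≤ d) (R : ℝ) (hR : 0 < R)
    (f0 : ℝ → ℝ)
    (h_nonneg : ∀ x, 0 ≤ f0 x) (h_meas : Measurable f0)
    (h_int : ∫ x, f0 x = 1)
    (h_symm : ∀ x, f0 (-x) = f0 x)
    (h_mono : ∀ x y, 0 ≤ x → x ≤ y → f0 y ≤ f0 x) :
    (∫ w : Fin d → ℝ, ∏ i, ⨆ x ∈ Set.Icc (-R) R, f0 (w i - x))
      = (1 + 2 * R * f0 0) ^ d :=
  product_sliding_sup_integral_general d R hR f0 h_nonneg h_int h_symm h_mono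
end

section
/- Recurrence for the exterior L∞ integral: Let R > 0 and let f₀ : ℝ → ℝ be a probability density function that is symmetric around 0 and non-increasing on [0, ∞). For d ∈ ℕ, d ≥ 1, define h(d) = ∫_{{w ∈ ℝ^d : ‖w‖_∞ > R}} ∏_{i=1}^d ( sup_{x_i: |x_i| ≤ R} f₀(w_i − x_i) ) dw. Then for all d ≥ 2, h(d) = (1 + 2R f₀(0)) h(d−1) + (2R f₀(0))^{d−1}, and h(1) = 1. -/
/-!
Since `f₀` is even and non-increasing in `|·|`, the supremum of `f₀ (w - x)` over `|x| ≤ R`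
is attained at the point of `[-R, R]` nearest to `w`, so it equals `g w = f₀ (max (|w| - R) 0)`:
the graph of `f₀` cut open at `0` with a plateau of height `f₀ 0` and width `2R` inserted. Hence
`∫ g = 1 + 2R f₀(0)` and `∫_{[-R, R]} g = 2R f₀(0)`. The exterior of the `L∞`-ball is the
complement of the cube `[-R, R]^d` and the integrand is `∏ i, g (w i)`, so by Fubini
`h(d) = (1 + 2R f₀(0))^d - (2R f₀(0))^d`, and the recurrence is algebra.
-/

open MeasureTheory Set

section Translation

variable {E : Type*} [NormedAddCommGroup E]

theorem integral_Ioi_comp_sub [NormedSpace ℝ E] (f : ℝ → E) (R : ℝ) :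
    ∫ t in Ioi R, f (t - R) = ∫ t in Ioi 0, f t := by
  simpa using (measurePreserving_sub_right volume R).setIntegral_preimage_emb
    (measurableEmbedding_subRight R) f (Ioi 0)

theorem integrableOn_Ioi_comp_sub {f : ℝ → E} (hf : IntegrableOn f (Ioi 0)) (R : ℝ) :
    IntegrableOn (fun t => f (t - R)) (Ioi R) := by
  simpa [Function.comp_def] using
    ((measurePreserving_sub_right volume R).integrableOn_comp_preimage
      (measurableEmbedding_subRight R) (s := Ioi 0)).2 hf

theorem integrable_comp_abs {g : ℝ → E} (hg : IntegrableOn g (Ici 0)) :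
    Integrable fun x => g |x| := by
  have hIci : IntegrableOn (fun x => g |x|) (Ici 0) :=
    hg.congr_fun (fun x hx => by rw [abs_of_nonneg (mem_Ici.1 hx)]) measurableSet_Ici
  have hIic : IntegrableOn (fun x => g |x|) (Iic 0) := by
    simpa [Function.comp_def] using
      ((Measure.measurePreserving_neg volume).integrableOn_comp_preimage
        (Homeomorph.neg ℝ).measurableEmbedding (s := Ici 0)).2 hIci
  rw [← integrableOn_univ, ← Iic_union_Ici (a := (0 : ℝ))]
  exact hIic.union hIci

end Translation

section Envelope

variable {f : ℝ → ℝ} {R : ℝ}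

theorem Function.Even.apply_abs_s7 (hf : f.Even) (x : ℝ) : f |x| = f x := by
  rcases abs_choice x with hx | hx <;> rw [hx]
  exact hf x

theorem integrableOn_Ioi_comp_max_sub (hR : 0 ≤ R) (hf : IntegrableOn f (Ioi 0)) :
    IntegrableOn (fun t => f (max (t - R) 0)) (Ioi 0) := by
  rw [← Ioc_union_Ioi_eq_Ioi hR]
  refine IntegrableOn.union ?_ ((integrableOn_Ioi_comp_sub hf R).congr_fun ?_ measurableSet_Ioi)
  · refine (integrableOn_const (C := f 0) measure_Ioc_lt_top.ne).congr_fun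
      (fun t ht => ?_) measurableSet_Ioc
    rw [max_eq_right (by linarith [ht.2])]
  · intro t ht
    simp only [max_eq_left (sub_nonneg.2 (mem_Ioi.1 ht).le)]

theorem integral_Ioi_comp_max_sub (hR : 0 ≤ R) (hf : IntegrableOn f (Ioi 0)) :
    ∫ t in Ioi 0, f (max (t - R) 0) = R * f 0 + ∫ t in Ioi 0, f t := by
  have hint := integrableOn_Ioi_comp_max_sub hR hf
  rw [← Ioc_union_Ioi_eq_Ioi hR] at hint
  rw [← integral_Ioi_comp_sub f R, ← Ioc_union_Ioi_eq_Ioi hR,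
    setIntegral_union Ioc_disjoint_Ioi_same measurableSet_Ioi
    (hint.mono_set subset_union_left) (hint.mono_set subset_union_right)]
  congr 1
  · rw [setIntegral_congr_fun measurableSet_Ioc (g := fun _ => f 0)
      (fun t ht => by rw [max_eq_right (by linarith [ht.2])]), setIntegral_const,
      Real.volume_real_Ioc_of_le hR, sub_zero, smul_eq_mul]
  · exact setIntegral_congr_fun measurableSet_Ioi
      (fun t ht => by rw [max_eq_left (sub_nonneg.2 (mem_Ioi.1 ht).le)])

theorem Function.Even.integral_eq_two_mul_integral_Ioi (hf : f.Even) :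
    ∫ x, f x = 2 * ∫ x in Ioi 0, f x := by
  simp_rw [← integral_comp_abs, hf.apply_abs_s7]

theorem integrable_comp_abs_max_sub (hR : 0 ≤ R) (hf : IntegrableOn f (Ioi 0)) :
    Integrable fun w => f (max (|w| - R) 0) :=
  integrable_comp_abs ((integrableOn_Ici_iff_integrableOn_Ioi enorm_ne_top).2
    (integrableOn_Ioi_comp_max_sub hR hf))

theorem integral_comp_abs_max_sub (hR : 0 ≤ R) (hf : Integrable f) (h_even : f.Even) :
    ∫ w, f (max (|w| - R) 0) = (∫ x, f x) + 2 * R * f 0 := by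
  rw [integral_comp_abs (f := fun t => f (max (t - R) 0)),
    integral_Ioi_comp_max_sub hR hf.integrableOn]
  linarith [h_even.integral_eq_two_mul_integral_Ioi]

theorem setIntegral_Icc_comp_abs_max_sub (hR : 0 ≤ R) :
    ∫ w in Icc (-R) R, f (max (|w| - R) 0) = 2 * R * f 0 := by
  rw [setIntegral_congr_fun measurableSet_Icc (g := fun _ => f 0)
    (fun w hw => by rw [max_eq_right (by linarith [abs_le.2 hw])]), setIntegral_const,
    Real.volume_real_Icc_of_le (by linarith), smul_eq_mul]
  ring

end Envelope

section Supremum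

variable {f : ℝ → ℝ}

theorem Function.Even.apply_le_apply_of_abs_le_s7 (hf : f.Even) (h_anti : AntitoneOn f (Ici 0))
    {a b : ℝ} (hab : |a| ≤ |b|) : f b ≤ f a := by
  rw [← hf.apply_abs_s7 a, ← hf.apply_abs_s7 b]
  exact h_anti (abs_nonneg a) (abs_nonneg b) hab

theorem abs_sub_clamp_le (R w : ℝ) : |w - max (-R) (min R w)| ≤ max (|w| - R) 0 := by
  rcases abs_cases w with ⟨hw, _⟩ | ⟨hw, _⟩ <;>
    rcases min_cases R w with ⟨hm, _⟩ | ⟨hm, _⟩ <;>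
    rcases max_cases (-R) (min R w) with ⟨hM, _⟩ | ⟨hM, _⟩ <;>
    rw [hM, abs_le] <;> constructor <;>
    linarith [le_max_left (|w| - R) 0, le_max_right (|w| - R) 0]

theorem iSup_Icc_apply_sub_eq {R : ℝ} (hR : 0 ≤ R) (h_nonneg : ∀ x, 0 ≤ f x) (hf : f.Even)
    (h_anti : AntitoneOn f (Ici 0)) (w : ℝ) :
    ⨆ x ∈ Icc (-R) R, f (w - x) = f (max (|w| - R) 0) := by
  have h_le : ∀ x ∈ Icc (-R) R, f (w - x) ≤ f (max (|w| - R) 0) := fun x hx =>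
    hf.apply_le_apply_of_abs_le_s7 h_anti <| by
      rw [abs_of_nonneg (le_max_right _ _)]
      exact max_le (by linarith [abs_sub_abs_le_abs_sub w x, abs_le.2 hx]) (abs_nonneg _)
  have h_clamp : max (-R) (min R w) ∈ Icc (-R) R :=
    ⟨le_max_left _ _, max_le (by linarith) (min_le_left _ _)⟩
  have h_attain : f (max (|w| - R) 0) ≤ f (w - max (-R) (min R w)) :=
    hf.apply_le_apply_of_abs_le_s7 h_anti <| by
      rw [abs_of_nonneg (le_max_right (|w| - R) 0)]
      exact abs_sub_clamp_le R w
  have h_bdd : BddAbove (range fun x => ⨆ _ : x ∈ Icc (-R) R, f (w - x)) :=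
    ⟨_, forall_mem_range.2 fun x => Real.iSup_le (h_le x) (h_nonneg _)⟩
  refine le_antisymm (Real.iSup_le (fun x => Real.iSup_le (h_le x) (h_nonneg _)) (h_nonneg _)) ?_
  exact h_attain.trans (le_ciSup_of_le h_bdd _ (by rw [ciSup_pos h_clamp]))

end Supremum

section Product

variable {𝕜 ι : Type*} [RCLike 𝕜] [Fintype ι]

theorem setIntegral_univ_pi_prod {E : ι → Type*} [∀ i, MeasurableSpace (E i)]
    {μ : ∀ i, Measure (E i)} [∀ i, SigmaFinite (μ i)] (g : ∀ i, E i → 𝕜) (s : ∀ i, Set (E i)) :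
    ∫ x in univ.pi s, ∏ i, g i (x i) ∂Measure.pi μ = ∏ i, ∫ y in s i, g i y ∂μ i := by
  rw [Measure.restrict_pi_pi]
  exact integral_fintype_prod_eq_prod g

theorem setIntegral_compl_univ_pi_prod {E : Type*} [MeasurableSpace E] {μ : Measure E}
    [SigmaFinite μ] {g : E → 𝕜} (hg : Integrable g μ) {s : Set E} (hs : MeasurableSet s) :
    ∫ x in (univ.pi fun _ : ι => s)ᶜ, ∏ i, g (x i) ∂Measure.pi (fun _ => μ) =
      (∫ y, g y ∂μ) ^ Fintype.card ι - (∫ y in s, g y ∂μ) ^ Fintype.card ι := by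
  have h_split := integral_add_compl (MeasurableSet.univ_pi fun _ : ι => hs)
    (Integrable.fintype_prod (μ := fun _ => μ) fun _ => hg)
  rw [setIntegral_univ_pi_prod, integral_fintype_prod_eq_pow, Finset.prod_const,
    Finset.card_univ] at h_split
  exact eq_sub_of_add_eq' h_split

end Product

theorem setOf_lt_norm_eq_compl_univ_pi_Icc (ι : Type*) [Fintype ι] {R : ℝ} (hR : 0 ≤ R) :
    {w : ι → ℝ | R < ‖w‖} = (univ.pi fun _ => Icc (-R) R)ᶜ := by
  have h_ball : {w : ι → ℝ | R < ‖w‖} = (Metric.closedBall 0 R)ᶜ := by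
    ext w
    simp
  rw [h_ball, closedBall_pi _ hR]
  simp [Real.closedBall_eq_Icc]

theorem exterior_Linf_integral_recurrence_general
    (R : ℝ) (hR : 0 < R)
    (f0 : ℝ → ℝ)
    (h_nonneg : ∀ x, 0 ≤ f0 x)
    (h_int : ∫ x, f0 x = 1)
    (h_symm : ∀ x, f0 (-x) = f0 x)
    (h_mono : ∀ x y, 0 ≤ x → x ≤ y → f0 y ≤ f0 x)
    (h : ℕ → ℝ)
    (hh : ∀ d : ℕ, 1 ≤ d →
      h d = ∫ w in {w : Fin d → ℝ | R < ‖w‖},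
              ∏ i, ⨆ x ∈ Set.Icc (-R) R, f0 (w i - x)) :
    h 1 = 1 ∧
      ∀ d : ℕ, 2 ≤ d →
        h d = (1 + 2 * R * f0 0) * h (d - 1) + (2 * R * f0 0) ^ (d - 1) := by
  have hf_int : Integrable f0 := Integrable.of_integral_ne_zero (by rw [h_int]; exact one_ne_zero)
  have h_anti : AntitoneOn f0 (Ici 0) := fun x hx y _ hxy => h_mono x y hx hxy
  have h_closed : ∀ d, 1 ≤ d → h d = (1 + 2 * R * f0 0) ^ d - (2 * R * f0 0) ^ d := by
    intro d hd
    simp_rw [hh d hd, setOf_lt_norm_eq_compl_univ_pi_Icc _ hR.le,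
      iSup_Icc_apply_sub_eq hR.le h_nonneg h_symm h_anti]
    rw [volume_pi, setIntegral_compl_univ_pi_prod (integrable_comp_abs_max_sub hR.le
      hf_int.integrableOn) measurableSet_Icc, integral_comp_abs_max_sub hR.le hf_int h_symm,
      setIntegral_Icc_comp_abs_max_sub hR.le, h_int, Fintype.card_fin]
  refine ⟨by rw [h_closed 1 le_rfl]; ring, fun d hd => ?_⟩
  obtain ⟨e, rfl⟩ : ∃ e, d = e + 1 := ⟨d - 1, by omega⟩
  rw [Nat.add_sub_cancel, h_closed (e + 1) (by omega), h_closed e (by omega)]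
  ring

/-- Recurrence for the exterior `L∞` integral: with
`h(d) = ∫_{‖w‖_∞ > R} ∏_i (sup_{|x_i| ≤ R} f₀(w_i - x_i)) dw`, one has `h(1) = 1` and
`h(d) = (1 + 2R f₀(0)) h(d-1) + (2R f₀(0))^{d-1}` for all `d ≥ 2`.
(The norm on `Fin d → ℝ` is the sup norm.) -/
theorem exterior_Linf_integral_recurrence
    (R : ℝ) (hR : 0 < R)
    (f0 : ℝ → ℝ)
    (h_nonneg : ∀ x, 0 ≤ f0 x) (h_meas : Measurable f0)
    (h_int : ∫ x, f0 x = 1)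
    (h_symm : ∀ x, f0 (-x) = f0 x)
    (h_mono : ∀ x y, 0 ≤ x → x ≤ y → f0 y ≤ f0 x)
    (h : ℕ → ℝ)
    (hh : ∀ d : ℕ, 1 ≤ d →
      h d = ∫ w in {w : Fin d → ℝ | R < ‖w‖},
              ∏ i, ⨆ x ∈ Set.Icc (-R) R, f0 (w i - x)) :
    h 1 = 1 ∧
      ∀ d : ℕ, 2 ≤ d →
        h d = (1 + 2 * R * f0 0) * h (d - 1) + (2 * R * f0 0) ^ (d - 1) :=
  exterior_Linf_integral_recurrence_general R hR f0 h_nonneg h_int h_symm h_mono h hh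
end

section
/- Variance lower bound for symmetric unimodal densities: Let f : ℝ → ℝ be a probability density function that is symmetric around 0, non-increasing on [0, ∞), and satisfies f(0) > 0. Then ∫_ℝ x² f(x) dx ≥ 1/(12 f(0)²). -/
/-!
Among densities bounded by `M`, the second moment is minimised by the uniform density `M` on
`[-a, a]` with `a = 1 / (2M)` (the bathtub principle), whose second moment is `1 / (12 M²)`.
Indeed `(x² - a²) (f x - g x) ≥ 0` pointwise for the uniform density `g`, and integrating this
against `∫ f = ∫ g = 1` gives `∫ x² g ≤ ∫ x² f`. A symmetric density that is non-increasing on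
`[0, ∞)` is bounded by `M = f 0`.
-/

open MeasureTheory Set
open scoped ENNReal

-- The pointwise hypothesis is `(φ x - K) (f x - g x) ≥ 0`, written without subtraction.
theorem lintegral_mul_le_lintegral_mul_of_add_le {α : Type*} [MeasurableSpace α] {μ : Measure α}
    {φ f g : α → ℝ≥0∞} {K : ℝ≥0∞} (hK : K ≠ ∞) (hg : AEMeasurable g μ)
    (h_eq : ∫⁻ x, f x ∂μ = ∫⁻ x, g x ∂μ) (hg_fin : ∫⁻ x, g x ∂μ ≠ ∞)
    (h : ∀ x, φ x * g x + K * f x ≤ φ x * f x + K * g x) :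
    ∫⁻ x, φ x * g x ∂μ ≤ ∫⁻ x, φ x * f x ∂μ := by
  refine (ENNReal.add_le_add_iff_right (ENNReal.mul_ne_top hK hg_fin)).mp ?_
  calc ∫⁻ x, φ x * g x ∂μ + K * ∫⁻ x, g x ∂μ
      = ∫⁻ x, φ x * g x ∂μ + ∫⁻ x, K * f x ∂μ := by rw [lintegral_const_mul' K f hK, h_eq]
    _ ≤ ∫⁻ x, φ x * g x + K * f x ∂μ := le_lintegral_add _ _
    _ ≤ ∫⁻ x, φ x * f x + K * g x ∂μ := lintegral_mono h
    _ = ∫⁻ x, φ x * f x ∂μ + K * ∫⁻ x, g x ∂μ := by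
      rw [lintegral_add_right' _ (hg.const_mul K), lintegral_const_mul' K g hK]

theorem lintegral_indicator_Icc_neg_const (a : ℝ) {M : ℝ} (hM : 0 ≤ M) :
    ∫⁻ x, (Icc (-a) a).indicator (fun _ => ENNReal.ofReal M) x = ENNReal.ofReal (2 * a * M) := by
  rw [lintegral_indicator_const measurableSet_Icc, Real.volume_Icc, ← ENNReal.ofReal_mul hM]
  ring_nf

theorem lintegral_sq_mul_indicator_Icc_neg_const {a M : ℝ} (ha : 0 ≤ a) (hM : 0 ≤ M) :
    ∫⁻ x, ENNReal.ofReal (x ^ 2) * (Icc (-a) a).indicator (fun _ => ENNReal.ofReal M) x =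
      ENNReal.ofReal (2 * a ^ 3 * M / 3) := by
  have h_ind : (fun x => ENNReal.ofReal (x ^ 2) *
        (Icc (-a) a).indicator (fun _ => ENNReal.ofReal M) x) =
      (Icc (-a) a).indicator fun x => ENNReal.ofReal (x ^ 2 * M) := by
    funext x
    by_cases hx : x ∈ Icc (-a) a <;> simp [hx, ENNReal.ofReal_mul (sq_nonneg x)]
  rw [h_ind, lintegral_indicator measurableSet_Icc,
    ← ofReal_integral_eq_lintegral_ofReal
      (by fun_prop : Continuous fun x : ℝ => x ^ 2 * M).integrableOn_Icc
      (ae_of_all _ fun x => by positivity),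
    integral_Icc_eq_integral_Ioc, ← intervalIntegral.integral_of_le (by linarith),
    intervalIntegral.integral_mul_const, integral_pow]
  ring_nf

theorem ofReal_sq_mul_indicator_Icc_neg_const_add_le {a M y : ℝ} (x : ℝ) (ha : 0 ≤ a)
    (hy : 0 ≤ y) (hyM : y ≤ M) :
    ENNReal.ofReal (x ^ 2) * (Icc (-a) a).indicator (fun _ => ENNReal.ofReal M) x
        + ENNReal.ofReal (a ^ 2) * ENNReal.ofReal y ≤
      ENNReal.ofReal (x ^ 2) * ENNReal.ofReal y
        + ENNReal.ofReal (a ^ 2) * (Icc (-a) a).indicator (fun _ => ENNReal.ofReal M) x := by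
  by_cases hx : x ∈ Icc (-a) a
  · have hxa : x ^ 2 ≤ a ^ 2 := sq_le_sq' hx.1 hx.2
    have hM : 0 ≤ M := hy.trans hyM
    simp only [indicator_of_mem hx, ← ENNReal.ofReal_mul (sq_nonneg _)]
    rw [← ENNReal.ofReal_add (by positivity) (by positivity),
      ← ENNReal.ofReal_add (by positivity) (by positivity)]
    exact ENNReal.ofReal_le_ofReal (by nlinarith)
  · have hax : a ^ 2 ≤ x ^ 2 := by
      simp only [mem_Icc, not_and_or, not_le] at hx
      rcases hx with hx | hx <;> nlinarith
    simp only [indicator_of_notMem hx, mul_zero, zero_add, add_zero,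
      ← ENNReal.ofReal_mul (sq_nonneg _)]
    exact ENNReal.ofReal_le_ofReal (by nlinarith)

theorem le_lintegral_sq_mul_of_le_const (f : ℝ → ℝ) {M : ℝ} (hM : 0 < M)
    (hf_nonneg : ∀ x, 0 ≤ f x) (hf_le : ∀ x, f x ≤ M)
    (hf_one : ∫⁻ x, ENNReal.ofReal (f x) = 1) :
    ENNReal.ofReal (1 / (12 * M ^ 2)) ≤ ∫⁻ x, ENNReal.ofReal (x ^ 2 * f x) := by
  set a := 1 / (2 * M) with ha_def
  have ha : 0 ≤ a := by positivity
  have h_uniform_one : ∫⁻ x, (Icc (-a) a).indicator (fun _ => ENNReal.ofReal M) x = 1 := by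
    rw [lintegral_indicator_Icc_neg_const a hM.le, ← ENNReal.ofReal_one, ha_def]
    congr 1
    field_simp
  calc ENNReal.ofReal (1 / (12 * M ^ 2))
      = ∫⁻ x, ENNReal.ofReal (x ^ 2) * (Icc (-a) a).indicator (fun _ => ENNReal.ofReal M) x := by
        rw [lintegral_sq_mul_indicator_Icc_neg_const ha hM.le, ha_def]
        congr 1
        field_simp
        ring
    _ ≤ ∫⁻ x, ENNReal.ofReal (x ^ 2) * ENNReal.ofReal (f x) :=
        lintegral_mul_le_lintegral_mul_of_add_le ENNReal.ofReal_ne_top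
          (measurable_const.indicator measurableSet_Icc).aemeasurable
          (hf_one.trans h_uniform_one.symm) (by rw [h_uniform_one]; exact ENNReal.one_ne_top)
          fun x => ofReal_sq_mul_indicator_Icc_neg_const_add_le x ha (hf_nonneg x) (hf_le x)
    _ = ∫⁻ x, ENNReal.ofReal (x ^ 2 * f x) := by
        simp only [ENNReal.ofReal_mul (sq_nonneg _)]

theorem variance_lower_bound_symmetric_unimodal_general
    (f : ℝ → ℝ)
    (h_nonneg : ∀ x, 0 ≤ f x)
    (h_int : ∫ x, f x = 1)
    (h_symm : ∀ x, f (-x) = f x)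
    (h_mono : ∀ x y, 0 ≤ x → x ≤ y → f y ≤ f x)
    (h0 : 0 < f 0) :
    ENNReal.ofReal (1 / (12 * f 0 ^ 2)) ≤ ∫⁻ x, ENNReal.ofReal (x ^ 2 * f x) := by
  have h_le : ∀ x, f x ≤ f 0 := fun x => by
    rcases le_total 0 x with hx | hx
    · exact h_mono 0 x le_rfl hx
    · exact h_symm x ▸ h_mono 0 (-x) le_rfl (neg_nonneg.mpr hx)
  have h_one : ∫⁻ x, ENNReal.ofReal (f x) = 1 := by
    rw [← ofReal_integral_eq_lintegral_ofReal (.of_integral_ne_zero (by simp [h_int]))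
      (ae_of_all _ h_nonneg), h_int, ENNReal.ofReal_one]
  exact le_lintegral_sq_mul_of_le_const f h0 h_nonneg h_le h_one

/-- Variance lower bound for symmetric unimodal densities: if `f` is a density on `ℝ`,
symmetric around `0`, non-increasing on `[0,∞)`, with `f(0) > 0`, then
`∫ x² f(x) dx ≥ 1/(12 f(0)²)` (the second moment may be `+∞`, hence the lower
Lebesgue integral formulation). -/
theorem variance_lower_bound_symmetric_unimodal
    (f : ℝ → ℝ)
    (h_nonneg : ∀ x, 0 ≤ f x) (h_meas : Measurable f)
    (h_int : ∫ x, f x = 1)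
    (h_symm : ∀ x, f (-x) = f x)
    (h_mono : ∀ x y, 0 ≤ x → x ≤ y → f y ≤ f x)
    (h0 : 0 < f 0) :
    ENNReal.ofReal (1 / (12 * f 0 ^ 2)) ≤ ∫⁻ x, ENNReal.ofReal (x ^ 2 * f x) :=
  variance_lower_bound_symmetric_unimodal_general f h_nonneg h_int h_symm h_mono h0
end

section
/- Theorem 4 (optimality of uniform noise, lower-bound part): Let σ > 0 and let f : ℝ → ℝ be a probability density function that is symmetric around 0, non-increasing on [0, ∞), and satisfies ∫_ℝ x² f(x) dx ≤ σ². Then f(0) ≥ 1/(2√3 σ). -/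
open MeasureTheory

/-! Symmetry and monotonicity bound `f` by `c = f 0`. A density bounded by `c` has second moment
at least that of the uniform density `c · 1_[-a, a]`, `a = 1 / (2c)`: pointwise
`x² f(x) ≥ a² f(x) - c (a² - x²)⁺`, and integrating gives `∫ x² f ≥ a² - 4ca³/3 = 1 / (12c²)`.
Hence `12 f(0)² σ² ≥ 1`. -/

lemma apply_le_apply_zero_of_even_of_antitoneOn {f : ℝ → ℝ} (h_even : Function.Even f)
    (h_mono : AntitoneOn f (Set.Ici 0)) (x : ℝ) : f x ≤ f 0 := by
  have h_abs : f |x| = f x := by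
    rcases abs_choice x with h | h <;> simp [h, h_even x]
  exact h_abs ▸ h_mono Set.self_mem_Ici (abs_nonneg x) (abs_nonneg x)

lemma integral_indicator_Icc_sq_sub_sq {a : ℝ} (ha : 0 ≤ a) :
    ∫ x, (Set.Icc (-a) a).indicator (fun x => a ^ 2 - x ^ 2) x = 4 * a ^ 3 / 3 := by
  rw [integral_indicator measurableSet_Icc, integral_Icc_eq_integral_Ioc,
    ← intervalIntegral.integral_of_le (by linarith)]
  simp only [intervalIntegral.integral_sub intervalIntegrable_const
    (intervalIntegral.intervalIntegrable_pow 2), intervalIntegral.integral_const, integral_pow,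
    smul_eq_mul]
  ring

section

variable {f : ℝ → ℝ} {c : ℝ}

lemma sq_mul_integral_sub_le_integral_sq_mul (hf₀ : ∀ x, 0 ≤ f x) (hfc : ∀ x, f x ≤ c)
    (hf : Integrable f) (hf₂ : Integrable fun x => x ^ 2 * f x) {a : ℝ} (ha : 0 ≤ a) :
    a ^ 2 * (∫ x, f x) - c * (4 * a ^ 3 / 3) ≤ ∫ x, x ^ 2 * f x := by
  set φ := (Set.Icc (-a) a).indicator (fun x => a ^ 2 - x ^ 2)
  have hφ : Integrable φ :=
    (continuous_const.sub (continuous_pow 2)).integrableOn_Icc.integrable_indicator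
      measurableSet_Icc
  have h_pointwise : ∀ x, a ^ 2 * f x - c * φ x ≤ x ^ 2 * f x := by
    intro x
    by_cases hx : x ∈ Set.Icc (-a) a
    · have : x ^ 2 ≤ a ^ 2 := sq_le_sq' hx.1 hx.2
      simp only [φ, Set.indicator_of_mem hx]
      nlinarith [hfc x]
    · have : a ^ 2 ≤ x ^ 2 := by
        rw [Set.mem_Icc, not_and_or, not_le, not_le] at hx
        rcases hx with h | h <;> nlinarith
      simp only [φ, Set.indicator_of_notMem hx]
      nlinarith [hf₀ x]
  calc a ^ 2 * (∫ x, f x) - c * (4 * a ^ 3 / 3)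
      = ∫ x, a ^ 2 * f x - c * φ x := by
        rw [integral_sub (hf.const_mul _) (hφ.const_mul _), integral_const_mul,
          integral_const_mul, integral_indicator_Icc_sq_sub_sq ha]
    _ ≤ ∫ x, x ^ 2 * f x :=
        integral_mono ((hf.const_mul _).sub (hφ.const_mul _)) hf₂ h_pointwise

lemma one_le_twelve_mul_sq_mul_integral_sq_mul (hf₀ : ∀ x, 0 ≤ f x) (hfc : ∀ x, f x ≤ c)
    (hf₁ : ∫ x, f x = 1) (hf₂ : Integrable fun x => x ^ 2 * f x) :
    1 ≤ 12 * c ^ 2 * ∫ x, x ^ 2 * f x := by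
  have hc : 0 < c := by
    by_contra! hc
    have : f = 0 := funext fun x => le_antisymm ((hfc x).trans hc) (hf₀ x)
    simp [this] at hf₁
  have hf : Integrable f := Integrable.of_integral_ne_zero (by simp [hf₁])
  -- `a = 1 / (2c)` maximises `a² - 4ca³/3`
  have h := sq_mul_integral_sub_le_integral_sq_mul hf₀ hfc hf hf₂ (a := 1 / (2 * c)) (by positivity)
  rw [hf₁] at h
  have : (1 / (2 * c)) ^ 2 * 1 - c * (4 * (1 / (2 * c)) ^ 3 / 3) = 1 / (12 * c ^ 2) := by
    field_simp; ring
  rw [this, div_le_iff₀ (by positivity)] at h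
  linarith

end

theorem uniform_noise_optimal_lower_bound_general
    (σ : ℝ) (hσ : 0 < σ)
    (f : ℝ → ℝ)
    (h_nonneg : ∀ x, 0 ≤ f x)
    (h_int : ∫ x, f x = 1)
    (h_symm : ∀ x, f (-x) = f x)
    (h_mono : ∀ x y, 0 ≤ x → x ≤ y → f y ≤ f x)
    (h_var : ∫⁻ x, ENNReal.ofReal (x ^ 2 * f x) ≤ ENNReal.ofReal (σ ^ 2)) :
    1 / (2 * Real.sqrt 3 * σ) ≤ f 0 := by
  have h_le : ∀ x, f x ≤ f 0 :=
    apply_le_apply_zero_of_even_of_antitoneOn h_symm fun x hx y _ hxy => h_mono x y hx hxy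
  have hf : Integrable f := Integrable.of_integral_ne_zero (by simp [h_int])
  have h_sq_nonneg : 0 ≤ᵐ[volume] fun x : ℝ => x ^ 2 * f x :=
    ae_of_all _ fun x => mul_nonneg (sq_nonneg x) (h_nonneg x)
  have h_sq_meas : AEStronglyMeasurable fun x : ℝ => x ^ 2 * f x :=
    (continuous_pow 2).aestronglyMeasurable.mul hf.aestronglyMeasurable
  have h_sq_int : Integrable fun x : ℝ => x ^ 2 * f x :=
    ⟨h_sq_meas, (hasFiniteIntegral_iff_ofReal h_sq_nonneg).2 (h_var.trans_lt ENNReal.ofReal_lt_top)⟩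
  have h_moment : ∫ x, x ^ 2 * f x ≤ σ ^ 2 := by
    rw [integral_eq_lintegral_of_nonneg_ae h_sq_nonneg h_sq_meas]
    exact ENNReal.toReal_le_of_le_ofReal (sq_nonneg σ) h_var
  have h_bound : 1 ≤ 12 * f 0 ^ 2 * σ ^ 2 :=
    (one_le_twelve_mul_sq_mul_integral_sq_mul h_nonneg h_le h_int h_sq_int).trans
      (by gcongr)
  have h_sq : (f 0 * (2 * Real.sqrt 3 * σ)) ^ 2 = 12 * f 0 ^ 2 * σ ^ 2 := by
    rw [mul_pow, mul_pow, mul_pow, Real.sq_sqrt (by norm_num)]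
    ring
  rw [div_le_iff₀ (by positivity)]
  nlinarith [mul_nonneg (h_nonneg 0) (by positivity : 0 ≤ 2 * Real.sqrt 3 * σ)]

/-- Theorem 4 (optimality of uniform noise, lower-bound part): if `f` is a density on `ℝ`,
symmetric around `0`, non-increasing on `[0,∞)`, with second moment at most `σ²`, then
`f(0) ≥ 1/(2√3 σ)`. -/
theorem uniform_noise_optimal_lower_bound
    (σ : ℝ) (hσ : 0 < σ)
    (f : ℝ → ℝ)
    (h_nonneg : ∀ x, 0 ≤ f x) (h_meas : Measurable f)
    (h_int : ∫ x, f x = 1)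
    (h_symm : ∀ x, f (-x) = f x)
    (h_mono : ∀ x y, 0 ≤ x → x ≤ y → f y ≤ f x)
    (h_var : ∫⁻ x, ENNReal.ofReal (x ^ 2 * f x) ≤ ENNReal.ofReal (σ ^ 2)) :
    1 / (2 * Real.sqrt 3 * σ) ≤ f 0 :=
  uniform_noise_optimal_lower_bound_general σ hσ f h_nonneg h_int h_symm h_mono h_var
end

section
/- Exterior L₁ integral for Laplace noise: Let d ∈ ℕ, d ≥ 1, λ > 0, R > 0, and let f(w) = (λ/2)^d exp(−λ‖w‖₁) be the density of d i.i.d. Laplace(0, 1/λ) components. Then ∫_{{w ∈ ℝ^d : ‖w‖₁ > R}} sup_{x: ‖x‖₁ ≤ R} f(w − x) dw = ∑_{i=0}^{d−1} (λR)^i / i!. -/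
/-!
For `‖w‖₁ > R`, the reverse triangle inequality bounds `f (w - x)` by `e^{λR} f(w)` on the ball,
with equality at the nearest point `(R / ‖w‖₁) • w`. The integral is therefore `e^{λR} P(‖W‖₁ > R)`
for `W` with density `f`. The `|Wᵢ|` are i.i.d. `Exp(λ)`, so `‖W‖₁` is `Erlang(d, λ)` with tail
`e^{-λR} ∑_{i<d} (λR)^i / i!`; this is proved by induction on `d`, splitting off one coordinate by
Fubini.
-/

open MeasureTheory

namespace LaplaceNoise

open Real Set Finset

variable {ι : Type*} [Fintype ι]

/-- `P(E₁ + ⋯ + E_d > R)` for i.i.d. `Exp(λ)` variables `Eᵢ`. -/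
noncomputable def erlangTail (lam : ℝ) (d : ℕ) (R : ℝ) : ℝ :=
  if R < 0 then 1 else exp (-lam * R) * ∑ i ∈ range d, (lam * R) ^ i / i.factorial

noncomputable def laplacePDF (lam t : ℝ) : ℝ := lam / 2 * exp (-lam * |t|)

noncomputable def laplaceDensity (lam : ℝ) (w : ι → ℝ) : ℝ :=
  ∏ i, laplacePDF lam (w i)

variable {lam : ℝ}

theorem laplaceDensity_eq (w : ι → ℝ) :
    laplaceDensity lam w = (lam / 2) ^ Fintype.card ι * exp (-lam * ∑ i, |w i|) := by
  simp only [laplaceDensity, laplacePDF, prod_mul_distrib, prod_const, card_univ, mul_sum,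
    exp_sum]

theorem laplaceDensity_cons {d : ℕ} (t : ℝ) (y : Fin d → ℝ) :
    laplaceDensity lam (Fin.cons t y : Fin (d + 1) → ℝ) = laplacePDF lam t * laplaceDensity lam y :=
  Fin.prod_univ_succ _

theorem integrable_laplacePDF (hlam : 0 < lam) : Integrable (laplacePDF lam) := by
  refine Integrable.const_mul ?_ _
  rw [← integrableOn_univ, ← Iic_union_Ioi (a := 0), integrableOn_union]
  constructor
  · refine (integrableOn_exp_mul_Iic hlam 0).congr_fun (fun t ht => ?_) measurableSet_Iic
    rw [abs_of_nonpos ht, neg_mul_neg]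
  · refine (integrableOn_exp_mul_Ioi (neg_neg_of_pos hlam) 0).congr_fun (fun t ht => ?_)
      measurableSet_Ioi
    rw [abs_of_pos ht]

theorem integrable_laplaceDensity (hlam : 0 < lam) :
    Integrable (laplaceDensity lam : (ι → ℝ) → ℝ) :=
  Integrable.fintype_prod fun _ => integrable_laplacePDF hlam

theorem sum_abs_sub_sum_abs_le (w x : ι → ℝ) :
    ∑ i, |w i| - ∑ i, |x i| ≤ ∑ i, |(w - x) i| := by
  rw [← sum_sub_distrib]
  exact sum_le_sum fun i _ => abs_sub_abs_le_abs_sub (w i) (x i)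

theorem exists_sum_abs_le_and_sum_abs_sub_eq {R : ℝ} {w : ι → ℝ}
    (hR : 0 ≤ R) (hw : R ≤ ∑ i, |w i|) :
    ∃ x : ι → ℝ, ∑ i, |x i| ≤ R ∧ ∑ i, |(w - x) i| = ∑ i, |w i| - R := by
  set S := ∑ i, |w i|
  rcases hR.eq_or_lt with rfl | hR0
  · exact ⟨0, by simp, by simp [S]⟩
  have hS : 0 < S := hR0.trans_le hw
  have hc : 0 ≤ R / S := div_nonneg hR hS.le
  have hc' : 0 ≤ 1 - R / S := sub_nonneg.2 ((div_le_one hS).2 hw)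
  refine ⟨(R / S) • w, le_of_eq ?_, ?_⟩
  · simp only [Pi.smul_apply, smul_eq_mul, abs_mul, abs_of_nonneg hc, ← mul_sum]
    exact div_mul_cancel₀ R hS.ne'
  · have hsub : w - (R / S) • w = (1 - R / S) • w := by rw [sub_smul, one_smul]
    simp only [hsub, Pi.smul_apply, smul_eq_mul, abs_mul, abs_of_nonneg hc', ← mul_sum]
    change (1 - R / S) * S = S - R
    field_simp

theorem biSup_comp_sum_abs_sub_of_antitone {φ : ℝ → ℝ} (hφ : Antitone φ)
    {R : ℝ} {w : ι → ℝ} (hR : 0 ≤ R) (hw : R ≤ ∑ i, |w i|) (hφ0 : 0 ≤ φ (∑ i, |w i| - R)) :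
    ⨆ x ∈ {x : ι → ℝ | ∑ i, |x i| ≤ R}, φ (∑ i, |(w - x) i|) = φ (∑ i, |w i| - R) := by
  have hle : ∀ x ∈ {x : ι → ℝ | ∑ i, |x i| ≤ R}, φ (∑ i, |(w - x) i|) ≤ φ (∑ i, |w i| - R) :=
    fun x hx => hφ (by linarith [sum_abs_sub_sum_abs_le w x, show ∑ i, |x i| ≤ R from hx])
  have hbdd : ∀ x, ⨆ (_ : x ∈ {x : ι → ℝ | ∑ i, |x i| ≤ R}), φ (∑ i, |(w - x) i|)
      ≤ φ (∑ i, |w i| - R) := fun x => Real.iSup_le (hle x) hφ0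
  obtain ⟨x₀, hx₀, hx₀w⟩ := exists_sum_abs_le_and_sum_abs_sub_eq hR hw
  refine le_antisymm (Real.iSup_le hbdd hφ0) (le_ciSup_of_le ⟨_, forall_mem_range.2 hbdd⟩ x₀ ?_)
  rw [ciSup_pos (show x₀ ∈ {x : ι → ℝ | ∑ i, |x i| ≤ R} from hx₀), hx₀w]

section Erlang

variable {d : ℕ} {R : ℝ}

theorem erlangTail_of_neg (hR : R < 0) : erlangTail lam d R = 1 := if_pos hR

theorem erlangTail_of_nonneg (hR : 0 ≤ R) :
    erlangTail lam d R = exp (-lam * R) * ∑ i ∈ range d, (lam * R) ^ i / i.factorial :=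
  if_neg hR.not_gt

theorem setIntegral_Ioi_mul_exp_neg_mul (hlam : 0 < lam) (c : ℝ) :
    ∫ s in Ioi c, lam * exp (-lam * s) = exp (-lam * c) := by
  rw [integral_const_mul, integral_exp_mul_Ioi (neg_neg_of_pos hlam)]
  field_simp

theorem intervalIntegral_mul_pow_sub_div_factorial (hlam : lam ≠ 0) (i : ℕ) :
    ∫ s in 0..R, lam * ((lam * R - lam * s) ^ i / i.factorial)
      = (lam * R) ^ (i + 1) / (i + 1).factorial := by
  rw [intervalIntegral.integral_const_mul,
    intervalIntegral.integral_comp_sub_mul (fun u => u ^ i / i.factorial) hlam, smul_eq_mul,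
    ← mul_assoc, mul_inv_cancel₀ hlam, one_mul, intervalIntegral.integral_div, integral_pow,
    Nat.factorial_succ]
  simp [div_div]

theorem setIntegral_Ioi_mul_exp_neg_mul_erlangTail (hlam : 0 < lam) :
    ∫ s in Ioi 0, lam * exp (-lam * s) * erlangTail lam d (R - s) = erlangTail lam (d + 1) R := by
  set g := fun s => lam * exp (-lam * s) * erlangTail lam d (R - s)
  have far : EqOn g (fun s => lam * exp (-lam * s)) (Ioi R) := fun s hs => by
    simp only [g, erlangTail_of_neg (sub_neg.2 hs), mul_one]
  rcases lt_or_ge R 0 with hR | hR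
  · rw [erlangTail_of_neg hR, setIntegral_congr_fun measurableSet_Ioi
      (far.mono (Ioi_subset_Ioi hR.le)), setIntegral_Ioi_mul_exp_neg_mul hlam, mul_zero, exp_zero]
  set h := fun s => exp (-lam * R) * ∑ i ∈ range d, lam * ((lam * R - lam * s) ^ i / i.factorial)
  have near : EqOn g h (Ioc 0 R) := fun s hs => by
    have hexp : exp (-lam * s) * exp (-lam * (R - s)) = exp (-lam * R) := by
      rw [← exp_add]; ring_nf
    simp only [g, h, erlangTail_of_nonneg (sub_nonneg.2 hs.2), ← mul_sum, ← hexp]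
    ring_nf
  have hcont : Continuous h := by fun_prop
  rw [← Ioc_union_Ioi_eq_Ioi hR, setIntegral_union Ioc_disjoint_Ioi_same measurableSet_Ioi
    ((hcont.integrableOn_Icc.mono_set Ioc_subset_Icc_self).congr_fun near.symm measurableSet_Ioc)
    (IntegrableOn.congr_fun ((integrableOn_exp_mul_Ioi (neg_neg_of_pos hlam) R).const_mul lam)
      far.symm measurableSet_Ioi),
    setIntegral_congr_fun measurableSet_Ioc near, setIntegral_congr_fun measurableSet_Ioi far,
    ← intervalIntegral.integral_of_le hR, intervalIntegral.integral_const_mul,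
    intervalIntegral.integral_finsetSum fun i _ => Continuous.intervalIntegrable (by fun_prop) _ _]
  simp only [intervalIntegral_mul_pow_sub_div_factorial hlam.ne',
    setIntegral_Ioi_mul_exp_neg_mul hlam, erlangTail_of_nonneg hR, sum_range_succ' _ d]
  rw [pow_zero, Nat.factorial_zero, Nat.cast_one, div_one]
  ring

theorem integral_laplacePDF_mul_erlangTail (hlam : 0 < lam) :
    ∫ t, laplacePDF lam t * erlangTail lam d (R - |t|) = erlangTail lam (d + 1) R := by
  have hsymm :=
    integral_comp_abs (f := fun s => lam / 2 * exp (-lam * s) * erlangTail lam d (R - s))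
  simp only [laplacePDF, hsymm, ← setIntegral_Ioi_mul_exp_neg_mul_erlangTail hlam,
    ← integral_const_mul]
  congr 1 with s
  ring

end Erlang

theorem indicator_laplaceDensity_cons {d : ℕ} (R t : ℝ) (y : Fin d → ℝ) :
    {w : Fin (d + 1) → ℝ | R < ∑ i, |w i|}.indicator (laplaceDensity lam) (Fin.cons t y)
      = laplacePDF lam t *
        {y : Fin d → ℝ | R - |t| < ∑ i, |y i|}.indicator (laplaceDensity lam) y := by
  simp only [indicator_apply, mem_ofPred_eq, Fin.sum_univ_succ, Fin.cons_zero, Fin.cons_succ,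
    sub_lt_iff_lt_add', laplaceDensity_cons, mul_ite, mul_zero]

theorem integral_indicator_laplaceDensity (hlam : 0 < lam) (d : ℕ) (R : ℝ) :
    ∫ w : Fin d → ℝ, {w | R < ∑ i, |w i|}.indicator (laplaceDensity lam) w
      = erlangTail lam d R := by
  induction d generalizing R with
  | zero =>
    rw [integral_unique]
    simp [erlangTail, indicator_apply, laplaceDensity, measureReal_def, volume_pi]
  | succ d ih =>
    have hmp := (volume_preserving_piFinSuccAbove (fun _ : Fin (d + 1) => ℝ) 0).symm
    have hint :
        Integrable ({w : Fin (d + 1) → ℝ | R < ∑ i, |w i|}.indicator (laplaceDensity lam)) :=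
      (integrable_laplaceDensity hlam).indicator (measurableSet_lt measurable_const (by fun_prop))
    rw [← hmp.integral_comp', Measure.volume_eq_prod, integral_prod]
    · simp only [MeasurableEquiv.piFinSuccAbove_symm_apply, Fin.insertNthEquiv, Equiv.coe_fn_mk,
        Fin.insertNth_zero', indicator_laplaceDensity_cons, integral_const_mul, ih]
      exact integral_laplacePDF_mul_erlangTail hlam
    · rw [← Measure.volume_eq_prod]
      exact (hmp.integrable_comp_emb (MeasurableEquiv.measurableEmbedding _)).2 hint

end LaplaceNoise

open LaplaceNoise Real in
theorem exterior_l1_integral_laplace_general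
    (d : ℕ) (lam R : ℝ) (hlam : 0 < lam) (hR : 0 < R)
    (f : (Fin d → ℝ) → ℝ)
    (hf : ∀ w, f w = (lam / 2) ^ d * Real.exp (-lam * ∑ i, |w i|)) :
    (∫ w in {w : Fin d → ℝ | R < ∑ i, |w i|},
        ⨆ x ∈ {x : Fin d → ℝ | ∑ i, |x i| ≤ R}, f (w - x))
      = ∑ i ∈ Finset.range d, (lam * R) ^ i / (i.factorial : ℝ) := by
  have hS : MeasurableSet {w : Fin d → ℝ | R < ∑ i, |w i|} :=
    measurableSet_lt measurable_const (by fun_prop)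
  have hφ : Antitone fun s => (lam / 2) ^ d * exp (-lam * s) := fun a b hab =>
    mul_le_mul_of_nonneg_left (exp_le_exp.2 (by nlinarith)) (by positivity)
  have hsup : ∀ w ∈ {w : Fin d → ℝ | R < ∑ i, |w i|},
      ⨆ x ∈ {x : Fin d → ℝ | ∑ i, |x i| ≤ R}, f (w - x) = exp (lam * R) * laplaceDensity lam w := by
    intro w hw
    simp only [hf]
    refine (biSup_comp_sum_abs_sub_of_antitone hφ hR.le hw.le (by positivity)).trans ?_
    rw [laplaceDensity_eq, Fintype.card_fin, mul_left_comm, ← exp_add]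
    ring_nf
  rw [setIntegral_congr_fun hS hsup, integral_const_mul, ← integral_indicator hS,
    integral_indicator_laplaceDensity hlam, erlangTail_of_nonneg hR.le, ← mul_assoc, ← exp_add]
  simp

/-- Exterior `L₁` integral for Laplace noise:
`∫_{‖w‖₁ > R} sup_{‖x‖₁ ≤ R} f(w - x) dw = ∑_{i=0}^{d-1} (λR)^i / i!`,
where `f(w) = (λ/2)^d exp(-λ‖w‖₁)` is the density of `d` i.i.d. Laplace components. -/
theorem exterior_l1_integral_laplace
    (d : ℕ) (hd : 1 ≤ d) (lam R : ℝ) (hlam : 0 < lam) (hR : 0 < R)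
    (f : (Fin d → ℝ) → ℝ)
    (hf : ∀ w, f w = (lam / 2) ^ d * Real.exp (-lam * ∑ i, |w i|)) :
    (∫ w in {w : Fin d → ℝ | R < ∑ i, |w i|},
        ⨆ x ∈ {x : Fin d → ℝ | ∑ i, |x i| ≤ R}, f (w - x))
      = ∑ i ∈ Finset.range d, (lam * R) ^ i / (i.factorial : ℝ) :=
  exterior_l1_integral_laplace_general d lam R hlam hR f hf
end
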